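/- Let K be a sick compactum. Then there exists an increasing sequence (K_n)_{n∈ℕ} of closed metrizable (possibly empty) subspaces of K with the following property: whenever (x_n)_{n∈ℕ} is an injective sequence in K whose image {x_n : n ∈ ℕ} is a discrete subspace of K and x_n ∉ K_n for every n ∈ ℕ, the closure of {x_n : n ∈ ℕ} in K is homeomorphic to βℕ, the Stone–Čech compactification of the discrete space ℕ. -/

import Mathlib

open MeasureTheory Topology Filter Set

/-- A compact Hausdorff space `K` is *sick* if there are a separable Banach lattice `E`,
a positive `u : E`, and an injective linear lattice homomorphism `T : C(K, ℝ) → E` with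
`T 1 = u` whose range is the principal ideal generated by `u`. -/
def IsSick (K : Type*) [TopologicalSpace K] : Prop :=
  ∃ (E : Type) (_ : NormedAddCommGroup E) (_ : Lattice E) (_ : HasSolidNorm E)
    (_ : IsOrderedAddMonoid E) (_ : NormedSpace ℝ E) (_ : PosSMulStrictMono ℝ E)
    (_ : PosSMulReflectLT ℝ E)
    (_ : CompleteSpace E) (_ : TopologicalSpace.SeparableSpace E)
    (u : E) (T : C(K, ℝ) →ₗ[ℝ] E),
    0 ≤ u ∧ Function.Injective T ∧
      (∀ f g : C(K, ℝ), T (f ⊔ g) = T f ⊔ T g) ∧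
      T 1 = u ∧
      Set.range T = {y : E | ∃ r : ℝ, 0 < r ∧ |y| ≤ r • u}

section Aux

set_option linter.unusedSectionVars false

variable {K : Type} [TopologicalSpace K] [CompactSpace K] [T2Space K]

/-- If all pairs of complementary subsets of an injective sequence have disjoint closures,
then the closure of the range is homeomorphic to `βℕ`. -/
lemma sep_to_homeo (x : ℕ → K)
    (hsep : ∀ A : Set ℕ, Disjoint (closure (x '' A)) (closure (x '' Aᶜ))) :
    Nonempty (↥(closure (Set.range x)) ≃ₜ StoneCech ℕ) := by
  set D : Set K := closure (Set.range x) with hD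
  haveI : CompactSpace ↥D := isCompact_iff_compactSpace.mp isClosed_closure.isCompact
  set x' : ℕ → ↥D := fun n => ⟨x n, subset_closure ⟨n, rfl⟩⟩ with hx'
  have hx'c : Continuous x' := continuous_of_discreteTopology
  set g : StoneCech ℕ → ↥D := stoneCechExtend hx'c with hg
  have hgc : Continuous g := continuous_stoneCechExtend hx'c
  have hgu : ∀ n, g (stoneCechUnit n) = x' n := fun n =>
    congrFun (stoneCechExtend_extends hx'c) n
  -- transporting closures
  have key : ∀ (A : Set ℕ) (p : StoneCech ℕ), p ∈ closure (stoneCechUnit '' A) →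
      (g p : K) ∈ closure (x '' A) := by
    intro A p hp
    have h1 : g p ∈ closure (g '' (stoneCechUnit '' A)) :=
      (image_closure_subset_closure_image hgc) ⟨p, hp, rfl⟩
    have h2 : g '' (stoneCechUnit '' A) = x' '' A := by
      rw [← image_comp, stoneCechExtend_extends hx'c]
    rw [h2] at h1
    have h3 : (g p : K) ∈ closure (Subtype.val '' (x' '' A)) :=
      (image_closure_subset_closure_image continuous_subtype_val) ⟨g p, h1, rfl⟩
    have h4 : Subtype.val '' (x' '' A) = x '' A := by
      rw [← image_comp]; rfl
    rwa [h4] at h3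
  -- covering
  have cover : ∀ (A : Set ℕ) (p : StoneCech ℕ),
      p ∈ closure (stoneCechUnit '' A) ∪ closure (stoneCechUnit '' Aᶜ) := by
    intro A p
    rw [← closure_union, ← image_union, union_compl_self, image_univ]
    rw [denseRange_stoneCechUnit.closure_range]
    trivial
  -- injectivity
  have hinj : Function.Injective g := by
    intro p q hpq
    by_contra hne
    obtain ⟨φ, hφp, hφq, hφ01⟩ := exists_continuous_zero_one_of_isClosed
      (isClosed_singleton (x := p)) (isClosed_singleton (x := q))
      (disjoint_singleton.mpr hne)
    set A : Set ℕ := {n | φ (stoneCechUnit n) < 1/2} with hA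
    have hpA : p ∈ closure (stoneCechUnit '' A) := by
      rcases (cover A p) with h | h
      · exact h
      · exfalso
        have : p ∈ {z | (1:ℝ)/2 ≤ φ z} := by
          refine closure_minimal ?_ (isClosed_le continuous_const φ.continuous) h
          rintro _ ⟨n, hn, rfl⟩
          simp only [mem_setOf_eq, one_div]
          exact le_of_not_gt (by simpa [hA] using hn)
        have := this
        rw [mem_setOf_eq, hφp rfl] at this
        norm_num at this
    have hqA : q ∈ closure (stoneCechUnit '' Aᶜ) := by
      rcases (cover A q) with h | h
      · exfalso
        have : q ∈ {z | φ z ≤ (1:ℝ)/2} := by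
          refine closure_minimal ?_ (isClosed_le φ.continuous continuous_const) h
          rintro _ ⟨n, hn, rfl⟩
          simp only [mem_setOf_eq, one_div]
          exact le_of_lt (by simpa [hA] using hn)
        rw [mem_setOf_eq, hφq rfl] at this
        norm_num at this
      · exact h
    have h1 := key A p hpA
    have h2 := key Aᶜ q hqA
    rw [hpq] at h1
    exact (hsep A).ne_of_mem h1 h2 rfl
  -- surjectivity
  have hsurj : Function.Surjective g := by
    have hclosed : IsClosed (Set.range g) := (isCompact_range hgc).isClosed
    have hdense : Dense (Set.range x') := by
      intro d
      have : (d : K) ∈ closure (Set.range x) := d.2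
      rw [IsEmbedding.subtypeVal.closure_eq_preimage_closure_image (Set.range x')]
      simp only [mem_preimage]
      have him : Subtype.val '' (Set.range x') = Set.range x := by
        rw [← Set.range_comp]; rfl
      rwa [him]
    intro d
    have : d ∈ closure (Set.range g) := by
      have hsub : Set.range x' ⊆ Set.range g := by
        rintro _ ⟨n, rfl⟩; exact ⟨stoneCechUnit n, hgu n⟩
      exact closure_mono hsub (hdense d)
    rwa [hclosed.closure_eq] at this
  exact ⟨(Continuous.homeoOfEquivCompactToT2 (f := Equiv.ofBijective g ⟨hinj, hsurj⟩) hgc).symm⟩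

/-- A countable discrete subspace of a compact Hausdorff space admits a pairwise disjoint
open expansion. -/
lemma strongly_discrete (x : ℕ → K) (hx : Function.Injective x)
    (hd : DiscreteTopology (Set.range x)) :
    ∃ U : ℕ → Set K, (∀ n, IsOpen (U n)) ∧ (∀ n, x n ∈ U n) ∧
      Pairwise (Function.onFun Disjoint U) := by
  -- each point is not in the closure of the others
  have hnotin : ∀ n, x n ∉ closure (Set.range x \ {x n}) := by
    intro n hmem
    have : IsOpen ({⟨x n, ⟨n, rfl⟩⟩} : Set (Set.range x)) := isOpen_discrete _
    rw [isOpen_induced_iff] at this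
    obtain ⟨O, hO, hOeq⟩ := this
    have hxO : x n ∈ O := by
      have : (⟨x n, ⟨n, rfl⟩⟩ : Set.range x) ∈ Subtype.val ⁻¹' O := by
        rw [hOeq]; rfl
      exact this
    rw [mem_closure_iff] at hmem
    obtain ⟨k, hkO, hk1, hk2⟩ := hmem O hO hxO
    obtain ⟨m, rfl⟩ := hk1
    have : (⟨x m, ⟨m, rfl⟩⟩ : Set.range x) ∈ Subtype.val ⁻¹' O := hkO
    rw [hOeq] at this
    simp only [mem_singleton_iff, Subtype.mk.injEq] at this
    exact hk2 (congrArg Subtype.val this)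
  -- separate by normality
  have hsep : ∀ n, ∃ V W : Set K, IsOpen V ∧ IsOpen W ∧ x n ∈ V ∧
      closure (Set.range x \ {x n}) ⊆ W ∧ Disjoint V W := by
    intro n
    obtain ⟨V, W, hV, hW, h1, h2, h3⟩ := normal_separation
      (isClosed_singleton (x := x n)) isClosed_closure
      (by
        rw [Set.disjoint_left]
        rintro k rfl
        exact hnotin n)
    exact ⟨V, W, hV, hW, h1 rfl, h2, h3⟩
  choose V W hV hW hxV hsubW hdisj using hsep
  refine ⟨fun n => V n ∩ ⋂ m ∈ Finset.range n, W m, ?_, ?_, ?_⟩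
  · intro n
    exact (hV n).inter (isOpen_biInter_finset fun m _ => hW m)
  · intro n
    refine ⟨hxV n, ?_⟩
    simp only [mem_iInter, Finset.mem_range]
    intro m hm
    refine hsubW m (subset_closure ⟨⟨n, rfl⟩, ?_⟩)
    simp only [mem_singleton_iff]
    intro h
    exact absurd (hx h) (by omega)
  · intro m n hmn
    rcases Nat.lt_or_ge m n with h | h
    · refine Disjoint.mono ?_ ?_ (hdisj m)
      · exact inter_subset_left
      · intro k hk
        have := hk.2
        simp only [mem_iInter, Finset.mem_range] at this
        exact this m h
    · have h' : n < m := by omega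
      refine (Disjoint.mono ?_ ?_ (hdisj n)).symm
      · exact inter_subset_left
      · intro k hk
        have := hk.2
        simp only [mem_iInter, Finset.mem_range] at this
        exact this n h'

variable {E : Type} [NormedAddCommGroup E] [Lattice E] [HasSolidNorm E]
    [IsOrderedAddMonoid E] [NormedSpace ℝ E] [PosSMulStrictMono ℝ E] [PosSMulReflectLT ℝ E]

section latbasic
variable (T : C(K, ℝ) →ₗ[ℝ] E)

lemma Tmono (hsup : ∀ f g : C(K, ℝ), T (f ⊔ g) = T f ⊔ T g)
    {f g : C(K, ℝ)} (h : f ≤ g) : T f ≤ T g := by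
  have : T g = T f ⊔ T g := by rw [← hsup, sup_eq_right.mpr h]
  rw [this]; exact le_sup_left

lemma Treflect (hinj : Function.Injective T)
    (hsup : ∀ f g : C(K, ℝ), T (f ⊔ g) = T f ⊔ T g)
    {f g : C(K, ℝ)} (h : T f ≤ T g) : f ≤ g := by
  have h1 : T (f ⊔ g) = T g := by rw [hsup, sup_eq_right.mpr h]
  exact sup_eq_right.mp (hinj h1)

lemma Tabs (hsup : ∀ f g : C(K, ℝ), T (f ⊔ g) = T f ⊔ T g)
    (f : C(K, ℝ)) : T |f| = |T f| := by
  have h1 : |f| = f ⊔ -f := rfl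
  have h2 : |T f| = T f ⊔ -(T f) := rfl
  rw [h1, h2, hsup, map_neg]

lemma Tinf (hsup : ∀ f g : C(K, ℝ), T (f ⊔ g) = T f ⊔ T g)
    (f g : C(K, ℝ)) : T (f ⊓ g) = T f ⊓ T g := by
  have h1 : f ⊓ g = f + g - f ⊔ g := by
    rw [eq_sub_iff_add_eq, inf_add_sup]
  have h2 : T f ⊓ T g = T f + T g - T f ⊔ T g := by
    rw [eq_sub_iff_add_eq, inf_add_sup]
  rw [h1, h2, map_sub, map_add, hsup]

/-- The key quantitative estimate: on the "bad" set where every function which is `1`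
near the point has `‖T f‖ ≥ ε`, evaluation is controlled by the norm of `E`. -/
lemma key_est (hsup : ∀ f g : C(K, ℝ), T (f ⊔ g) = T f ⊔ T g)
    {ε : ℝ} (hε : 0 < ε) {t : K}
    (ht : ∀ f : C(K, ℝ), 0 ≤ f → f ≤ 1 → (∀ᶠ s in 𝓝 t, f s = 1) → ε ≤ ‖T f‖)
    (f g : C(K, ℝ)) : ε * |f t - g t| ≤ 4 * ‖T f - T g‖ := by
  set w : C(K, ℝ) := f - g with hw
  set δ : ℝ := |w t| with hδ
  rcases eq_or_lt_of_le (abs_nonneg (w t)) with h0 | hδpos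
  · rw [← map_sub]
    have : ε * |f t - g t| = 0 := by
      have : |f t - g t| = δ := by simp [hδ, hw]
      rw [this, hδ, ← h0, mul_zero]
    rw [this]
    positivity
  · set v : C(K, ℝ) := (((4 / δ) • |w| - 1) ⊔ 0) ⊓ 1 with hv
    have hv0 : (0 : C(K, ℝ)) ≤ v := le_inf le_sup_right zero_le_one
    have hv1 : v ≤ 1 := inf_le_right
    have hvev : ∀ᶠ s in 𝓝 t, v s = 1 := by
      have hopen : IsOpen {s : K | δ / 2 < |w s|} :=
        isOpen_lt continuous_const (continuous_abs.comp w.continuous)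
      have htmem : t ∈ {s : K | δ / 2 < |w s|} := by
        show δ / 2 < |w t|
        rw [← hδ]
        linarith
      filter_upwards [hopen.mem_nhds htmem] with s hs
      have h4 : (2 : ℝ) ≤ (4 / δ) * |w s| := by
        rw [div_mul_eq_mul_div, le_div_iff₀ hδpos]
        linarith
      simp only [hv, ContinuousMap.inf_apply, ContinuousMap.sup_apply,
        ContinuousMap.sub_apply, ContinuousMap.smul_apply, ContinuousMap.abs_apply,
        ContinuousMap.one_apply, ContinuousMap.zero_apply, smul_eq_mul]
      rw [max_eq_left (by linarith), min_eq_right (by linarith)]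
    have hle : v ≤ (4 / δ) • |w| := by
      refine le_trans inf_le_left (sup_le ?_ ?_)
      · exact sub_le_self _ zero_le_one
      · intro s
        simp only [ContinuousMap.smul_apply, ContinuousMap.abs_apply,
          ContinuousMap.zero_apply, smul_eq_mul]
        show (0:ℝ) ≤ (4 / δ) * |w s|
        exact mul_nonneg (div_nonneg (by norm_num) hδpos.le) (abs_nonneg _)
    have hεv : ε ≤ ‖T v‖ := ht v hv0 hv1 hvev
    have hTv0 : (0 : E) ≤ T v := by
      have := Tmono T hsup hv0
      rwa [map_zero] at this
    have hTvle : T v ≤ (4 / δ) • |T w| := by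
      have := Tmono T hsup hle
      rwa [_root_.map_smul, Tabs T hsup] at this
    have hTwpos : (0 : E) ≤ |T w| := abs_nonneg _
    have hnorm : ‖T v‖ ≤ ‖(4 / δ) • |T w|‖ := by
      refine HasSolidNorm.solid ?_
      rw [abs_of_nonneg hTv0, abs_of_nonneg (smul_nonneg (by positivity) hTwpos)]
      exact hTvle
    have hn2 : ‖(4 / δ) • |T w|‖ = (4 / δ) * ‖T w‖ := by
      rw [norm_smul, norm_abs_eq_norm, Real.norm_eq_abs, abs_of_pos (by positivity)]
    have hfinal : ε ≤ (4 / δ) * ‖T w‖ := le_trans hεv (hnorm.trans hn2.le)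
    have : ε * δ ≤ 4 * ‖T w‖ := by
      rw [div_mul_eq_mul_div] at hfinal
      rw [le_div_iff₀ hδpos] at hfinal
      linarith
    have hwt : |f t - g t| = δ := by simp [hδ, hw]
    rw [hwt, ← map_sub]
    exact this

/-- A closed set on which evaluation is controlled by the norm of a separable space is
metrizable. -/
lemma metrizable_of_est [TopologicalSpace.SeparableSpace E]
    (S : Set K) (hS : IsClosed S) {ε : ℝ} (hε : 0 < ε)
    (hest : ∀ t ∈ S, ∀ f g : C(K, ℝ), ε * |f t - g t| ≤ 4 * ‖T f - T g‖) :
    TopologicalSpace.MetrizableSpace ↥S := by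
  haveI : SecondCountableTopology E := UniformSpace.secondCountable_of_separable E
  obtain ⟨Q, hQc, hQd⟩ := TopologicalSpace.exists_countable_dense ↥(Set.range (⇑T))
  haveI : Countable ↥Q := hQc.to_subtype
  have hex : ∀ q : ↥Q, ∃ f : C(K, ℝ), T f = (q : ↥(Set.range ⇑T)).1 := fun q => q.1.2
  choose pre hpre using hex
  set Φ : ↥S → (↥Q → ℝ) := fun t q => pre q t.1 with hΦ
  have hΦc : Continuous Φ := continuous_pi fun q => (pre q).continuous.comp continuous_subtype_val
  have hΦi : Function.Injective Φ := by
    intro s t h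
    by_contra hne
    have hne' : (s : K) ≠ (t : K) := fun hh => hne (Subtype.ext hh)
    obtain ⟨φ, hφ0, hφ1, hφI⟩ := exists_continuous_zero_one_of_isClosed
      (isClosed_singleton (x := (s : K))) (isClosed_singleton (x := (t : K)))
      (disjoint_singleton.mpr hne')
    set p : ↥(Set.range ⇑T) := ⟨T φ, mem_range_self φ⟩ with hp
    obtain ⟨q, hqQ, hdq⟩ := Metric.mem_closure_iff.mp (hQd.closure_eq ▸ (mem_univ p) :
      p ∈ closure Q) (ε / 16) (by positivity)
    set qq : ↥Q := ⟨q, hqQ⟩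
    have hd : ‖T φ - T (pre qq)‖ < ε / 16 := by
      have h2 := hdq
      rw [Subtype.dist_eq, dist_eq_norm] at h2
      rwa [hpre qq]
    have e1 := hest s.1 s.2 φ (pre qq)
    have e2 := hest t.1 t.2 φ (pre qq)
    have hφs : φ (s : K) = 0 := hφ0 rfl
    have hφt : φ (t : K) = 1 := hφ1 rfl
    rw [hφs] at e1
    rw [hφt] at e2
    have hb : 4 * ‖T φ - T (pre qq)‖ < ε / 4 := by linarith
    have e1' : |pre qq (s : K)| < 1 / 4 := by
      rw [zero_sub, abs_neg] at e1
      nlinarith [abs_nonneg (pre qq (s : K))]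
    have e2' : 3 / 4 < pre qq (t : K) := by
      have : ε * |1 - pre qq (t : K)| < ε / 4 := lt_of_le_of_lt e2 hb
      have h3 : |1 - pre qq (t : K)| < 1 / 4 := by
        by_contra hcon
        push_neg at hcon
        nlinarith
      have := abs_lt.mp h3
      linarith [this.1, this.2]
    have hval : pre qq (s : K) = pre qq (t : K) := congrFun h qq
    have := abs_lt.mp e1'
    linarith [this.1, this.2]
  haveI : CompactSpace ↥S := isCompact_iff_compactSpace.mp hS.isCompact
  have hemb := hΦc.isClosedEmbedding hΦi
  haveI : SecondCountableTopology ↥S := hemb.toIsEmbedding.secondCountableTopology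
  exact TopologicalSpace.metrizableSpace_of_t3_secondCountable ↥S

/-- For pairwise disjoint positive functions with small norms, the "sup over A" exists in the
separable lattice and provides separating continuous functions. -/
lemma latt_sep [CompleteSpace E] {u : E} (hinj : Function.Injective T)
    (hsup : ∀ f g : C(K, ℝ), T (f ⊔ g) = T f ⊔ T g)
    (h1 : T 1 = u)
    (hrange : Set.range T = {y : E | ∃ r : ℝ, 0 < r ∧ |y| ≤ r • u})
    (x : ℕ → K) (f : ℕ → C(K, ℝ))
    (hf0 : ∀ n, 0 ≤ f n) (hf1 : ∀ n, f n ≤ 1) (hfx : ∀ n, f n (x n) = 1)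
    (hdisj : ∀ m n, m ≠ n → f m ⊓ f n = 0)
    (hnorm : ∀ n, ‖T (f n)‖ ≤ (1/2 : ℝ)^n) (A : Set ℕ) :
    ∃ g : C(K, ℝ), (∀ n ∈ A, 1 ≤ g (x n)) ∧ (∀ n ∉ A, g (x n) = 0) := by
  classical
  set c : ℕ → C(K, ℝ) := fun n => if n ∈ A then f n else 0 with hc
  have hc0 : ∀ n, (0 : C(K, ℝ)) ≤ c n := by
    intro n; by_cases h : n ∈ A <;> simp [hc, h, hf0 n]
  have hcf : ∀ n, c n ≤ f n := by
    intro n; by_cases h : n ∈ A <;> simp [hc, h, hf0 n]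
  have hcd : ∀ m n, m ≠ n → c m ⊓ c n = 0 := by
    intro m n hmn
    refine le_antisymm ?_ (le_inf (hc0 m) (hc0 n))
    calc c m ⊓ c n ≤ f m ⊓ f n := inf_le_inf (hcf m) (hcf n)
    _ = 0 := hdisj m n hmn
  have hcfd : ∀ m n, m ≠ n → c m ⊓ f n = 0 := by
    intro m n hmn
    refine le_antisymm ?_ (le_inf (hc0 m) (hf0 n))
    calc c m ⊓ f n ≤ f m ⊓ f n := inf_le_inf (hcf m) le_rfl
    _ = 0 := hdisj m n hmn
  have hnormc : ∀ n, ‖T (c n)‖ ≤ (1/2 : ℝ)^n := by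
    intro n
    by_cases h : n ∈ A
    · simpa [hc, h] using hnorm n
    · simp only [hc, if_neg h, map_zero, norm_zero]
      positivity
  have hsum : Summable (fun n => T (c n)) :=
    Summable.of_norm_bounded (summable_geometric_of_lt_one (by norm_num) (by norm_num)) hnormc
  set y : E := ∑' n, T (c n) with hy
  have hPS : Tendsto (fun N => ∑ n ∈ Finset.range N, T (c n)) atTop (𝓝 y) :=
    hsum.hasSum.tendsto_sum_nat
  have hTc0 : ∀ n, (0 : E) ≤ T (c n) := by
    intro n
    have := Tmono T hsup (hc0 n)
    rwa [map_zero] at this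
  -- partial sums of c bounded by 1
  have hsumle : ∀ N, (∑ n ∈ Finset.range N, c n) ≤ 1 := by
    intro N
    rw [ContinuousMap.le_def]
    intro s
    simp only [ContinuousMap.sum_apply, ContinuousMap.one_apply]
    by_cases hall : ∀ n ∈ Finset.range N, c n s = 0
    · rw [Finset.sum_eq_zero hall]
      simp
    · push_neg at hall
      obtain ⟨n₀, hn₀mem, hn₀⟩ := hall
      have hpos : 0 < c n₀ s := lt_of_le_of_ne (by have := hc0 n₀ s; simpa using this) (Ne.symm hn₀)
      rw [Finset.sum_eq_single_of_mem n₀ hn₀mem]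
      · calc c n₀ s ≤ f n₀ s := hcf n₀ s
        _ ≤ 1 := by have := hf1 n₀ s; simpa using this
      · intro m _ hmn
        have h0 : c m ⊓ c n₀ = 0 := hcd m n₀ hmn
        have : min (c m s) (c n₀ s) = 0 := by
          have := congrFun (congrArg DFunLike.coe h0) s
          simpa [ContinuousMap.inf_apply] using this
        rcases min_eq_iff.mp this with ⟨h, _⟩ | ⟨h, _⟩
        · exact h
        · exact absurd h (ne_of_gt hpos)
  have hPle : ∀ N, (∑ n ∈ Finset.range N, T (c n)) ≤ u := by
    intro N
    rw [← map_sum]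
    have := Tmono T hsup (hsumle N)
    rwa [h1] at this
  have hy_le_u : y ≤ u := le_of_tendsto hPS (Eventually.of_forall hPle)
  have hy0 : (0 : E) ≤ y := tsum_nonneg hTc0
  have hyrange : y ∈ Set.range T := by
    rw [hrange]
    exact ⟨1, one_pos, by rw [abs_of_nonneg hy0, one_smul]; exact hy_le_u⟩
  obtain ⟨g, hg⟩ := hyrange
  have hg0 : (0 : C(K, ℝ)) ≤ g := by
    refine Treflect T hinj hsup ?_
    rw [map_zero, hg]
    exact hy0
  refine ⟨g, ?_, ?_⟩
  · intro n hn
    have hTfn : T (f n) ≤ y := by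
      rw [hy, Summable.tsum_eq_add_tsum_ite hsum n]
      have hrest : (0 : E) ≤ ∑' m, if m = n then 0 else T (c m) := by
        refine tsum_nonneg fun m => ?_
        by_cases h : m = n <;> simp [h, hTc0 m]
      have hcn : c n = f n := by simp [hc, hn]
      rw [hcn]
      exact le_add_of_nonneg_right hrest
    have : f n ≤ g := Treflect T hinj hsup (by rw [hg]; exact hTfn)
    have h2 := ContinuousMap.le_def.mp this (x n)
    rwa [hfx n] at h2
  · intro n hn
    -- show y ⊓ T (f n) = 0
    have hterm : ∀ N, (∑ m ∈ Finset.range N, T (c m)) ⊓ T (f n) = 0 := by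
      intro N
      rw [← map_sum, ← Tinf T hsup]
      have hz : (∑ m ∈ Finset.range N, c m) ⊓ f n = 0 := by
        ext s
        simp only [ContinuousMap.inf_apply, ContinuousMap.sum_apply, ContinuousMap.zero_apply]
        have hcms : ∀ m, min (c m s) (f n s) = 0 := by
          intro m
          by_cases hmn : m = n
          · have hmA : m ∉ A := by rw [hmn]; exact hn
            have hcm : c m = 0 := by simp [hc, hmA]
            rw [hcm]
            simp only [ContinuousMap.zero_apply]
            exact min_eq_left (by have := hf0 n s; simpa using this)
          · have h0 := hcfd m n hmn
            have := congrFun (congrArg DFunLike.coe h0) s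
            simpa [ContinuousMap.inf_apply] using this
        by_cases hfns : f n s = 0
        · rw [hfns]
          refine min_eq_right ?_
          exact Finset.sum_nonneg fun m _ => by have := hc0 m s; simpa using this
        · have hfpos : 0 < f n s :=
            lt_of_le_of_ne (by have := hf0 n s; simpa using this) (Ne.symm hfns)
          have hzero : ∀ m ∈ Finset.range N, c m s = 0 := by
            intro m _
            rcases min_eq_iff.mp (hcms m) with ⟨h, _⟩ | ⟨h, _⟩
            · exact h
            · exact absurd h (ne_of_gt hfpos)
          rw [Finset.sum_eq_zero hzero]
          exact min_eq_left (le_of_lt hfpos)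
      rw [hz, map_zero]
    have hcont : Continuous fun z : E => z ⊓ T (f n) := continuous_id.inf continuous_const
    have hlim : Tendsto (fun N => (∑ m ∈ Finset.range N, T (c m)) ⊓ T (f n)) atTop
        (𝓝 (y ⊓ T (f n))) := (hcont.tendsto y).comp hPS
    have hconst : (fun N => (∑ m ∈ Finset.range N, T (c m)) ⊓ T (f n)) = fun _ => (0 : E) := by
      funext N; exact hterm N
    rw [hconst] at hlim
    have hyinf : y ⊓ T (f n) = 0 := (tendsto_nhds_unique tendsto_const_nhds hlim).symm
    have hginf : g ⊓ f n = 0 := by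
      refine hinj ?_
      rw [Tinf T hsup, hg, map_zero, hyinf]
    have := congrFun (congrArg DFunLike.coe hginf) (x n)
    simp only [ContinuousMap.inf_apply, ContinuousMap.zero_apply, hfx n] at this
    have hgx0 : 0 ≤ g (x n) := by have := hg0 (x n); simpa using this
    rcases min_eq_iff.mp this with ⟨h, _⟩ | ⟨h, _⟩
    · exact h
    · norm_num at h

end latbasic

end Aux

/-- In a sick compactum `K` there is an increasing sequence of closed metrizable subspaces
`K n` such that the closure of any injective discrete sequence `(x n)` with `x n ∉ K n` is
homeomorphic to `βℕ`. -/
theorem stmt_12 (K : Type) [TopologicalSpace K] [CompactSpace K] [T2Space K]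
    (hK : IsSick K) :
    ∃ Kn : ℕ → Set K, Monotone Kn ∧ (∀ n, IsClosed (Kn n)) ∧
      (∀ n, TopologicalSpace.MetrizableSpace (Kn n)) ∧
      ∀ x : ℕ → K, Function.Injective x → DiscreteTopology (Set.range x) →
        (∀ n, x n ∉ Kn n) →
        Nonempty (↥(closure (Set.range x)) ≃ₜ StoneCech ℕ) := by
  obtain ⟨E, i1, i2, i3, i4, i5, i6, i7, i8, i9, u, T, hu, hinj, hsup, h1, hrange⟩ := hK
  refine ⟨fun n => {t : K | ∀ f : C(K, ℝ), 0 ≤ f → f ≤ 1 →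
      (∀ᶠ s in 𝓝 t, f s = 1) → (1/2 : ℝ)^n ≤ ‖T f‖}, ?_, ?_, ?_, ?_⟩
  · -- monotone
    intro m n hmn t ht f hf0 hf1 hev
    refine le_trans ?_ (ht f hf0 hf1 hev)
    exact pow_le_pow_of_le_one (by norm_num) (by norm_num) hmn
  · -- closed
    intro n
    rw [← isOpen_compl_iff, isOpen_iff_mem_nhds]
    intro t ht
    simp only [mem_compl_iff, mem_setOf_eq, not_forall] at ht
    obtain ⟨f, hf0, hf1, hev, hlt⟩ := ht
    push_neg at hlt
    filter_upwards [hev.eventually_nhds] with s hs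
    simp only [mem_compl_iff, mem_setOf_eq, not_forall]
    exact ⟨f, hf0, hf1, hs, by push_neg; exact hlt⟩
  · -- metrizable
    intro n
    refine metrizable_of_est T _ ?_ (ε := (1/2 : ℝ)^n) (by positivity) ?_
    · rw [← isOpen_compl_iff, isOpen_iff_mem_nhds]
      intro t ht
      simp only [mem_compl_iff, mem_setOf_eq, not_forall] at ht
      obtain ⟨f, hf0, hf1, hev, hlt⟩ := ht
      push_neg at hlt
      filter_upwards [hev.eventually_nhds] with s hs
      simp only [mem_compl_iff, mem_setOf_eq, not_forall]
      exact ⟨f, hf0, hf1, hs, by push_neg; exact hlt⟩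
    · intro t ht f g
      exact key_est T hsup (by positivity) ht f g
  · -- main statement
    intro x hxinj hxdisc hxnot
    obtain ⟨U, hUopen, hxU, hUdisj⟩ := strongly_discrete x hxinj hxdisc
    -- small functions at each point
    have hex : ∀ n, ∃ h : C(K, ℝ), 0 ≤ h ∧ h ≤ 1 ∧ (∀ᶠ s in 𝓝 (x n), h s = 1) ∧
        ‖T h‖ < (1/2 : ℝ)^n := by
      intro n
      have := hxnot n
      simp only [mem_setOf_eq, not_forall] at this
      obtain ⟨h, h0, h1', hev, hlt⟩ := this
      push_neg at hlt
      exact ⟨h, h0, h1', hev, hlt⟩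
    choose hfun hh0 hh1 hhev hhnrm using hex
    -- Urysohn bump functions supported in U n
    have hUry : ∀ n, ∃ ψ : C(K, ℝ), EqOn ψ 0 (U n)ᶜ ∧ EqOn ψ 1 {x n} ∧
        ∀ s, ψ s ∈ Set.Icc (0:ℝ) 1 := by
      intro n
      exact exists_continuous_zero_one_of_isClosed (isClosed_compl_iff.mpr (hUopen n))
        (isClosed_singleton (x := x n))
        (by
          rw [Set.disjoint_left]
          rintro k hk rfl
          exact hk (hxU n))
    choose ψ hψ0 hψ1 hψI using hUry
    set f : ℕ → C(K, ℝ) := fun n => hfun n ⊓ ψ n with hf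
    have hf0 : ∀ n, (0 : C(K, ℝ)) ≤ f n := by
      intro n
      refine le_inf (hh0 n) ?_
      intro s
      simpa using (hψI n s).1
    have hf1 : ∀ n, f n ≤ 1 := fun n => le_trans inf_le_left (hh1 n)
    have hfx : ∀ n, f n (x n) = 1 := by
      intro n
      have hh : hfun n (x n) = 1 := (hhev n).self_of_nhds
      have hp : ψ n (x n) = 1 := hψ1 n rfl
      simp [hf, ContinuousMap.inf_apply, hh, hp]
    have hfd : ∀ m n, m ≠ n → f m ⊓ f n = 0 := by
      intro m n hmn
      ext s
      simp only [ContinuousMap.inf_apply, ContinuousMap.zero_apply]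
      have hψzero : ψ m s = 0 ∨ ψ n s = 0 := by
        by_cases hsm : s ∈ U m
        · right
          refine hψ0 n ?_
          intro hsn
          exact (Set.disjoint_left.mp (hUdisj hmn) hsm) hsn
        · left
          exact hψ0 m hsm
      have hfm0 : 0 ≤ f m s := by have := hf0 m s; simpa using this
      have hfn0 : 0 ≤ f n s := by have := hf0 n s; simpa using this
      rcases hψzero with h | h
      · have : f m s ≤ 0 := by
          have : f m s ≤ ψ m s := by
            simp [hf, ContinuousMap.inf_apply, min_le_right]
          rwa [h] at this
        have hfm : f m s = 0 := le_antisymm this hfm0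
        rw [hfm]
        exact min_eq_left hfn0
      · have : f n s ≤ 0 := by
          have : f n s ≤ ψ n s := by
            simp [hf, ContinuousMap.inf_apply, min_le_right]
          rwa [h] at this
        have hfn : f n s = 0 := le_antisymm this hfn0
        rw [hfn]
        exact min_eq_right hfm0
    have hfnorm : ∀ n, ‖T (f n)‖ ≤ (1/2 : ℝ)^n := by
      intro n
      have hle : T (f n) ≤ T (hfun n) := Tmono T hsup inf_le_left
      have h0 : (0 : E) ≤ T (f n) := by
        have := Tmono T hsup (hf0 n)
        rwa [map_zero] at this
      have h0' : (0 : E) ≤ T (hfun n) := le_trans h0 hle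
      have : ‖T (f n)‖ ≤ ‖T (hfun n)‖ := by
        refine HasSolidNorm.solid ?_
        rw [abs_of_nonneg h0, abs_of_nonneg h0']
        exact hle
      exact le_trans this (hhnrm n).le
    -- separation of complementary subsets
    have hsep : ∀ A : Set ℕ, Disjoint (closure (x '' A)) (closure (x '' Aᶜ)) := by
      intro A
      obtain ⟨g, hgA, hgAc⟩ := latt_sep T hinj hsup h1 hrange x f hf0 hf1 hfx hfd hfnorm A
      have hsub1 : closure (x '' A) ⊆ {s : K | 1 ≤ g s} := by
        refine closure_minimal ?_ (isClosed_le continuous_const g.continuous)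
        rintro _ ⟨n, hn, rfl⟩
        exact hgA n hn
      have hsub2 : closure (x '' Aᶜ) ⊆ {s : K | g s ≤ 0} := by
        refine closure_minimal ?_ (isClosed_le g.continuous continuous_const)
        rintro _ ⟨n, hn, rfl⟩
        exact (hgAc n hn).le
      rw [Set.disjoint_left]
      intro s hs1 hs2
      have := hsub1 hs1
      have := hsub2 hs2
      simp only [mem_setOf_eq] at *
      linarith
    exact sep_to_homeo x hsep
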